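/- arXiv:2307.09798 — 3 statements merged into one kernel-verified Lean document; each statement's English description precedes it below -/
import Mathlib

section
/- If ξ has the Max-U-Exp(a, λ) distribution, then for every real k > -1, E[ξ^k] = a^k/(k+1) + (k/(a λ^{k+1})) γ(k+1, aλ) + (k/λ^k) Γ(k, λa), where γ and Γ are the lower and upper incomplete Gamma functions. -/
open MeasureTheory Set

/-- The Max-U-Exp(a, λ) probability density function. -/
noncomputable def maxUExpPDF (a lam x : ℝ) : ℝ :=
  if x ≤ 0 then 0
  else if x ≤ a then (1 / a) * (1 - Real.exp (-lam * x) + lam * x * Real.exp (-lam * x))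
  else lam * Real.exp (-lam * x)

/-- The lower incomplete Gamma function γ(s, x) = ∫₀^x t^(s-1) e^{-t} dt. -/
noncomputable def lowerIncGamma (s x : ℝ) : ℝ :=
  ∫ t in Set.Ioc (0 : ℝ) x, t ^ (s - 1) * Real.exp (-t)

/-- The upper incomplete Gamma function Γ(s, x) = ∫_x^∞ t^(s-1) e^{-t} dt. -/
noncomputable def upperIncGamma (s x : ℝ) : ℝ :=
  ∫ t in Set.Ioi x, t ^ (s - 1) * Real.exp (-t)

/-! Split the integral at `a`. On `(0, a]` integration by parts gives
`λ ∫ x^(k+1) e^(-λx) = (k+1) ∫ x^k e^(-λx) - a^(k+1) e^(-λa)`, and on `(a, ∞)` it gives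
`λ ∫ x^k e^(-λx) = a^k e^(-λa) + k ∫ x^(k-1) e^(-λx)`; the boundary terms `a^k e^(-λa)` cancel.
The substitution `t = λx` turns the two remaining integrals into `γ(k+1, aλ) / λ^(k+1)` and
`Γ(k, λa) / λ^k`. -/

open Real Filter
open scoped Pointwise

theorem setIntegral_smul_rpow_mul_exp_neg {c : ℝ} (hc : 0 < c) {s : Set ℝ} (hsm : MeasurableSet s)
    (hs : s ⊆ Ici 0) (p : ℝ) :
    ∫ t in c • s, t ^ p * exp (-t) = c ^ (p + 1) * ∫ x in s, x ^ p * exp (-c * x) := by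
  have h := Measure.setIntegral_comp_smul_of_pos volume (fun t : ℝ => t ^ p * exp (-t)) s hc
  have hscale : ∫ x in s, (c • x) ^ p * exp (-(c • x)) =
      c ^ p * ∫ x in s, x ^ p * exp (-c * x) := by
    rw [← integral_const_mul]
    refine setIntegral_congr_fun hsm fun x hx => ?_
    rw [smul_eq_mul, mul_rpow hc.le (hs hx), neg_mul, mul_assoc]
  rw [hscale, Module.finrank_self, pow_one, smul_eq_mul, eq_inv_mul_iff_mul_eq₀ hc.ne'] at h
  rw [← h, rpow_add_one hc.ne']
  ring

theorem lowerIncGamma_mul {c : ℝ} (hc : 0 < c) (s x : ℝ) :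
    lowerIncGamma s (c * x) = c ^ s * ∫ t in Ioc 0 x, t ^ (s - 1) * exp (-c * t) := by
  have h := setIntegral_smul_rpow_mul_exp_neg hc measurableSet_Ioc
    (Ioc_subset_Ioi_self.trans Ioi_subset_Ici_self) (s - 1) (s := Ioc 0 x)
  rwa [LinearOrderedField.smul_Ioc hc, mul_zero, sub_add_cancel] at h

theorem upperIncGamma_mul {c x : ℝ} (hc : 0 < c) (hx : 0 ≤ x) (s : ℝ) :
    upperIncGamma s (c * x) = c ^ s * ∫ t in Ioi x, t ^ (s - 1) * exp (-c * t) := by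
  have h := setIntegral_smul_rpow_mul_exp_neg hc measurableSet_Ioi
    (Ioi_subset_Ici_self.trans (Ici_subset_Ici.2 hx)) (s - 1) (s := Ioi x)
  rwa [LinearOrderedField.smul_Ioi hc, sub_add_cancel] at h

theorem integrableOn_Ioc_rpow_mul_exp {p : ℝ} (hp : -1 < p) (c a : ℝ) :
    IntegrableOn (fun x => x ^ p * exp (-c * x)) (Ioc 0 a) :=
  ((intervalIntegral.intervalIntegrable_rpow' hp).mul_continuousOn
    (by fun_prop : Continuous fun x => exp (-c * x)).continuousOn).1

theorem integrableOn_Ioi_rpow_mul_exp {c a : ℝ} (hc : 0 < c) (ha : 0 < a) (p : ℝ) :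
    IntegrableOn (fun x => x ^ p * exp (-c * x)) (Ioi a) := by
  refine integrable_of_isBigO_exp_neg (half_pos hc) (fun x hx => ?_) ?_
  · exact ((continuousAt_rpow_const x p (Or.inl (ha.trans_le hx).ne')).mul
      (by fun_prop : Continuous fun x => exp (-c * x)).continuousAt).continuousWithinAt
  · refine ((isLittleO_rpow_exp_pos_mul_atTop p (half_pos hc)).isBigO.mul
      (Asymptotics.isBigO_refl (fun x => exp (-c * x)) atTop)).congr_right fun x => ?_
    rw [← exp_add]
    congr 1
    ring

theorem hasDerivAt_rpow_mul_exp {c p x : ℝ} (hx : x ≠ 0) :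
    HasDerivAt (fun x => x ^ p * exp (-c * x))
      (p * (x ^ (p - 1) * exp (-c * x)) - c * (x ^ p * exp (-c * x))) x := by
  have h : HasDerivAt (fun x => x ^ p * exp (-c * x))
      (p * x ^ (p - 1) * exp (-c * x) + x ^ p * (exp (-c * x) * (-c * 1))) x :=
    (hasDerivAt_rpow_const (Or.inl hx)).mul ((hasDerivAt_id' x).const_mul (-c)).exp
  convert h using 1
  ring

theorem integral_Ioi_rpow_mul_exp {c a : ℝ} (hc : 0 < c) (ha : 0 < a) (p : ℝ) :
    c * ∫ x in Ioi a, x ^ p * exp (-c * x) =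
      a ^ p * exp (-c * a) + p * ∫ x in Ioi a, x ^ (p - 1) * exp (-c * x) := by
  have hp := integrableOn_Ioi_rpow_mul_exp hc ha p
  have hp1 := integrableOn_Ioi_rpow_mul_exp hc ha (p - 1)
  have hftc := integral_Ioi_of_hasDerivAt_of_tendsto'
    (fun x hx => hasDerivAt_rpow_mul_exp (c := c) (p := p) (ha.trans_le hx).ne')
    ((hp1.const_mul p).sub (hp.const_mul c))
    (tendsto_rpow_mul_exp_neg_mul_atTop_nhds_zero p c hc)
  rw [integral_sub (hp1.const_mul p) (hp.const_mul c), integral_const_mul,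
    integral_const_mul] at hftc
  linarith

theorem integral_Ioc_rpow_mul_exp {p : ℝ} (hp : -1 < p) (c : ℝ) {a : ℝ} (ha : 0 ≤ a) :
    c * ∫ x in Ioc 0 a, x ^ (p + 1) * exp (-c * x) =
      (p + 1) * (∫ x in Ioc 0 a, x ^ p * exp (-c * x)) - a ^ (p + 1) * exp (-c * a) := by
  have hp0 : 0 < p + 1 := by linarith
  have hp := integrableOn_Ioc_rpow_mul_exp hp c a
  have hp1 := integrableOn_Ioc_rpow_mul_exp (by linarith : -1 < p + 1) c a
  have hcont : ContinuousOn (fun x => x ^ (p + 1) * exp (-c * x)) (Icc 0 a) :=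
    ((continuous_rpow_const hp0.le).mul (by fun_prop)).continuousOn
  have hderiv : ∀ x ∈ Ioo 0 a, HasDerivWithinAt (fun x => x ^ (p + 1) * exp (-c * x))
      ((p + 1) * (x ^ p * exp (-c * x)) - c * (x ^ (p + 1) * exp (-c * x))) (Ioi x) x :=
    fun x hx => by
      simpa only [add_sub_cancel_right] using
        (hasDerivAt_rpow_mul_exp (c := c) (p := p + 1) hx.1.ne').hasDerivWithinAt
  have hftc := intervalIntegral.integral_eq_sub_of_hasDeriv_right_of_le ha hcont hderiv
    ((intervalIntegrable_iff_integrableOn_Ioc_of_le ha).2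
      ((hp.const_mul (p + 1)).sub (hp1.const_mul c)))
  rw [intervalIntegral.integral_of_le ha, integral_sub (hp.const_mul (p + 1)) (hp1.const_mul c),
    integral_const_mul, integral_const_mul, zero_rpow hp0.ne', zero_mul, sub_zero] at hftc
  linarith

theorem maxUExpPDF_of_mem_Ioc {a lam x : ℝ} (hx : x ∈ Ioc 0 a) :
    maxUExpPDF a lam x = a⁻¹ * (1 - exp (-lam * x) + lam * x * exp (-lam * x)) := by
  rw [maxUExpPDF, if_neg hx.1.not_ge, if_pos hx.2, one_div]

theorem maxUExpPDF_of_lt {a lam x : ℝ} (ha : 0 ≤ a) (hx : a < x) :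
    maxUExpPDF a lam x = lam * exp (-lam * x) := by
  rw [maxUExpPDF, if_neg (ha.trans_lt hx).not_ge, if_neg hx.not_ge]

section MaxUExp

variable {a lam k : ℝ}

theorem rpow_mul_maxUExpPDF_eqOn_Ioc :
    EqOn (fun x => x ^ k * maxUExpPDF a lam x)
      (fun x => a⁻¹ * (x ^ k - x ^ k * exp (-lam * x) + lam * (x ^ (k + 1) * exp (-lam * x))))
      (Ioc 0 a) := fun x hx => by
  simp only [maxUExpPDF_of_mem_Ioc hx, rpow_add_one hx.1.ne']
  ring

theorem rpow_mul_maxUExpPDF_eqOn_Ioi (ha : 0 ≤ a) :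
    EqOn (fun x => x ^ k * maxUExpPDF a lam x) (fun x => lam * (x ^ k * exp (-lam * x)))
      (Ioi a) := fun x hx => by
  simp only [maxUExpPDF_of_lt ha hx]
  ring

theorem integrableOn_Ioc_rpow_mul_maxUExpPDF (hk : -1 < k) :
    IntegrableOn (fun x => x ^ k * maxUExpPDF a lam x) (Ioc 0 a) := by
  refine IntegrableOn.congr_fun (Integrable.const_mul ?_ _)
    rpow_mul_maxUExpPDF_eqOn_Ioc.symm measurableSet_Ioc
  exact ((intervalIntegral.intervalIntegrable_rpow' hk).1.sub
    (integrableOn_Ioc_rpow_mul_exp hk lam a)).add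
    ((integrableOn_Ioc_rpow_mul_exp (by linarith) lam a).const_mul lam)

theorem integrableOn_Ioi_rpow_mul_maxUExpPDF (ha : 0 < a) (hlam : 0 < lam) :
    IntegrableOn (fun x => x ^ k * maxUExpPDF a lam x) (Ioi a) :=
  IntegrableOn.congr_fun ((integrableOn_Ioi_rpow_mul_exp hlam ha k).const_mul lam)
    (rpow_mul_maxUExpPDF_eqOn_Ioi ha.le).symm measurableSet_Ioi

theorem integral_Ioc_rpow_mul_maxUExpPDF (ha : 0 < a) (hk : -1 < k) :
    ∫ x in Ioc 0 a, x ^ k * maxUExpPDF a lam x =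
      a ^ k / (k + 1) + k / a * (∫ x in Ioc 0 a, x ^ k * exp (-lam * x))
        - a ^ k * exp (-lam * a) := by
  have hk0 : k + 1 ≠ 0 := by linarith
  have hpow := (intervalIntegral.intervalIntegrable_rpow' (a := 0) (b := a) hk).1
  have hk' := integrableOn_Ioc_rpow_mul_exp hk lam a
  have hk1 := integrableOn_Ioc_rpow_mul_exp (by linarith : -1 < k + 1) lam a
  have hsub : IntegrableOn (fun x => x ^ k - x ^ k * exp (-lam * x)) (Ioc 0 a) := hpow.sub hk'
  have hint_pow : ∫ x in Ioc 0 a, x ^ k = a ^ (k + 1) / (k + 1) := by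
    rw [← intervalIntegral.integral_of_le ha.le, integral_rpow (Or.inl hk), zero_rpow hk0,
      sub_zero]
  rw [setIntegral_congr_fun measurableSet_Ioc rpow_mul_maxUExpPDF_eqOn_Ioc, integral_const_mul,
    integral_add hsub (hk1.const_mul lam), integral_sub hpow hk', integral_const_mul,
    integral_Ioc_rpow_mul_exp hk lam ha.le, hint_pow, rpow_add_one ha.ne']
  field_simp
  ring

theorem integral_Ioi_rpow_mul_maxUExpPDF (ha : 0 < a) (hlam : 0 < lam) :
    ∫ x in Ioi a, x ^ k * maxUExpPDF a lam x =
      a ^ k * exp (-lam * a) + k * ∫ x in Ioi a, x ^ (k - 1) * exp (-lam * x) := by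
  rw [setIntegral_congr_fun measurableSet_Ioi (rpow_mul_maxUExpPDF_eqOn_Ioi ha.le),
    integral_const_mul, integral_Ioi_rpow_mul_exp hlam ha]

end MaxUExp

theorem maxUExp_moments (a lam : ℝ) (ha : 0 < a) (hlam : 0 < lam) :
    ∀ k : ℝ, -1 < k →
      (∫ x in Set.Ioi (0 : ℝ), x ^ k * maxUExpPDF a lam x) =
        a ^ k / (k + 1) + (k / (a * lam ^ (k + 1))) * lowerIncGamma (k + 1) (a * lam)
          + (k / lam ^ k) * upperIncGamma k (lam * a) := by
  intro k hk
  rw [← Ioc_union_Ioi_eq_Ioi ha.le, setIntegral_union Ioc_disjoint_Ioi_same measurableSet_Ioi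
      (integrableOn_Ioc_rpow_mul_maxUExpPDF hk) (integrableOn_Ioi_rpow_mul_maxUExpPDF ha hlam),
    integral_Ioc_rpow_mul_maxUExpPDF ha hk, integral_Ioi_rpow_mul_maxUExpPDF ha hlam,
    mul_comm a lam, lowerIncGamma_mul hlam, upperIncGamma_mul hlam ha.le, add_sub_cancel_right]
  have hlam_pow : ∀ s : ℝ, lam ^ s ≠ 0 := fun s => (rpow_pos_of_pos hlam s).ne'
  field_simp [hlam_pow]
  ring
end

section
/- For t > 0, the integral ∫₀^a (x/a) e^{-xt}(1 - e^{-λx} + λx e^{-λx}) dx + ∫_a^∞ λ x e^{-(λ+t)x} dx equals (1/(at²))(1 - e^{-at} - a t e^{-at}) + ((λ - t)/(a(λ+t)³))(1 - e^{-a(λ+t)}) + (t/(λ+t)²) e^{-a(λ+t)}. -/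
/-!
Multiplying out the bracket, the integrand on `[0, a]` is a combination of `x e^{-tx}`,
`x e^{-(λ+t)x}` and `x² e^{-(λ+t)x}`, and the tail integrand is `λ x e^{-(λ+t)x}`. Each of these has
an elementary antiderivative of the form `p(x) e^{-sx}` with `p` a polynomial, so both integrals are
evaluated by the fundamental theorem of calculus (on `[a, ∞)` using that `p(x) e^{-sx} → 0`), and
the identity reduces to an algebraic one.
-/

open MeasureTheory Set

open Real Filter Topology

theorem hasDerivAt_mul_exp_neg_mul {f : ℝ → ℝ} {f' x : ℝ} (hf : HasDerivAt f f' x) (s : ℝ) :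
    HasDerivAt (fun y => f y * exp (-s * y)) ((f' - s * f x) * exp (-s * x)) x := by
  have hexp : HasDerivAt (fun y => exp (-s * y)) (exp (-s * x) * -s) x :=
    ((hasDerivAt_id x).const_mul (-s)).exp.congr_deriv (by simp)
  exact (hf.mul hexp).congr_deriv (by ring)

section

variable {s : ℝ}

theorem hasDerivAt_antideriv_mul_exp_neg_mul (hs : s ≠ 0) (x : ℝ) :
    HasDerivAt (fun y => (-(1 / s ^ 2) - y / s) * exp (-s * y)) (x * exp (-s * x)) x :=
  (hasDerivAt_mul_exp_neg_mul (((hasDerivAt_id' x).div_const s).const_sub _) s).congr_deriv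
    (by field_simp; ring)

theorem hasDerivAt_antideriv_sq_mul_exp_neg_mul (hs : s ≠ 0) (x : ℝ) :
    HasDerivAt (fun y => (-(2 / s ^ 3) - 2 * y / s ^ 2 - y ^ 2 / s) * exp (-s * y))
      (x ^ 2 * exp (-s * x)) x :=
  (hasDerivAt_mul_exp_neg_mul (HasDerivAt.sub
    ((((hasDerivAt_id' x).const_mul 2).div_const (s ^ 2)).const_sub _)
    ((hasDerivAt_pow 2 x).div_const s)) s).congr_deriv
    (by simp only [Pi.sub_apply]; field_simp; ring)

theorem integral_mul_exp_neg_mul (hs : s ≠ 0) (a : ℝ) :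
    ∫ x in (0 : ℝ)..a, x * exp (-s * x) = (1 - exp (-s * a) - s * a * exp (-s * a)) / s ^ 2 := by
  rw [intervalIntegral.integral_eq_sub_of_hasDerivAt
    (fun x _ => hasDerivAt_antideriv_mul_exp_neg_mul hs x)
    (Continuous.intervalIntegrable (by fun_prop) _ _)]
  simp only [mul_zero, exp_zero, mul_one, zero_div, sub_zero]
  field_simp
  ring

theorem integral_sq_mul_exp_neg_mul (hs : s ≠ 0) (a : ℝ) :
    ∫ x in (0 : ℝ)..a, x ^ 2 * exp (-s * x) =
      (2 - (2 + 2 * s * a + (s * a) ^ 2) * exp (-s * a)) / s ^ 3 := by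
  rw [intervalIntegral.integral_eq_sub_of_hasDerivAt
    (fun x _ => hasDerivAt_antideriv_sq_mul_exp_neg_mul hs x)
    (Continuous.intervalIntegrable (by fun_prop) _ _)]
  simp only [mul_zero, exp_zero, mul_one, zero_div, sub_zero, zero_pow two_ne_zero]
  field_simp
  ring

theorem tendsto_affine_mul_exp_neg_mul_atTop (hs : 0 < s) (b c : ℝ) :
    Tendsto (fun x => (b + c * x) * exp (-s * x)) atTop (𝓝 0) := by
  have h0 := tendsto_rpow_mul_exp_neg_mul_atTop_nhds_zero 0 s hs
  have h1 := tendsto_rpow_mul_exp_neg_mul_atTop_nhds_zero 1 s hs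
  simp only [rpow_zero, one_mul, rpow_one] at h0 h1
  simpa [add_mul, mul_assoc] using (h0.const_mul b).add (h1.const_mul c)

theorem integral_Ioi_mul_exp_neg_mul (hs : 0 < s) {a : ℝ} (ha : 0 ≤ a) :
    ∫ x in Ioi a, x * exp (-s * x) = (1 / s ^ 2 + a / s) * exp (-s * a) := by
  have hlim : Tendsto (fun y => (-(1 / s ^ 2) - y / s) * exp (-s * y)) atTop (𝓝 0) := by
    convert tendsto_affine_mul_exp_neg_mul_atTop hs (-(1 / s ^ 2)) (-s⁻¹) using 3 with y
    ring
  rw [integral_Ioi_of_hasDerivAt_of_nonneg'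
    (fun x _ => hasDerivAt_antideriv_mul_exp_neg_mul hs.ne' x)
    (fun x hx => mul_nonneg (ha.trans hx.out.le) (exp_pos _).le) hlim]
  ring

end

theorem mixture_integral_identity (a lam : ℝ) (ha : 0 < a) (hlam : 0 < lam) :
    ∀ t : ℝ, 0 < t →
      (∫ x in (0 : ℝ)..a,
          (x / a) * Real.exp (-x * t) *
            (1 - Real.exp (-lam * x) + lam * x * Real.exp (-lam * x)))
        + (∫ x in Set.Ioi a, lam * x * Real.exp (-(lam + t) * x)) =
        (1 / (a * t ^ 2)) * (1 - Real.exp (-a * t) - a * t * Real.exp (-a * t))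
          + ((lam - t) / (a * (lam + t) ^ 3)) * (1 - Real.exp (-a * (lam + t)))
          + (t / (lam + t) ^ 2) * Real.exp (-a * (lam + t)) := by
  intro t ht
  have hs : 0 < lam + t := by positivity
  have hsplit (x : ℝ) : (x / a) * exp (-x * t) * (1 - exp (-lam * x) + lam * x * exp (-lam * x))
      = a⁻¹ * (x * exp (-t * x)) - a⁻¹ * (x * exp (-(lam + t) * x))
        + lam / a * (x ^ 2 * exp (-(lam + t) * x)) := by
    have hexp : exp (-(lam + t) * x) = exp (-lam * x) * exp (-t * x) := by
      rw [← exp_add]; ring_nf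
    rw [hexp, neg_mul, mul_comm x t, ← neg_mul]
    ring
  have hint {f : ℝ → ℝ} (hf : Continuous f) : IntervalIntegrable f volume 0 a :=
    hf.intervalIntegrable 0 a
  simp_rw [hsplit]
  rw [intervalIntegral.integral_add (hint (by fun_prop)) (hint (by fun_prop)),
    intervalIntegral.integral_sub (hint (by fun_prop)) (hint (by fun_prop)),
    intervalIntegral.integral_const_mul, intervalIntegral.integral_const_mul,
    intervalIntegral.integral_const_mul, integral_mul_exp_neg_mul ht.ne',
    integral_mul_exp_neg_mul hs.ne', integral_sq_mul_exp_neg_mul hs.ne']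
  simp_rw [mul_assoc lam]
  rw [integral_const_mul, integral_Ioi_mul_exp_neg_mul hs ha.le]
  field_simp
  ring
end

section
/- The function G(t) defined by G(t) = 0 for t ≤ 0 and G(t) = 1 - (1 - e^{-at})/(at) + (t/(a(λ+t)²))(1 - e^{-a(λ+t)}) for t > 0 is the CDF of the Exp-Max-U-Exp(a, λ) distribution: G is differentiable on (0, ∞) with derivative equal to the Exp-Max-U-Exp(a, λ) density, G(0+) = 0, and G(t) → 1 as t → ∞. -/
open Filter Set

/-- The Exp-Max-U-Exp(a, λ) probability density function. -/
noncomputable def expMaxUExpPDF (a lam t : ℝ) : ℝ :=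
  if t ≤ 0 then 0
  else (1 / (a * t ^ 2)) * (1 - Real.exp (-a * t) - a * t * Real.exp (-a * t))
    + ((lam - t) / (a * (lam + t) ^ 3)) * (1 - Real.exp (-a * (lam + t)))
    + (t / (lam + t) ^ 2) * Real.exp (-a * (lam + t))

/-- The Exp-Max-U-Exp(a, λ) cumulative distribution function. -/
noncomputable def expMaxUExpCDF (a lam t : ℝ) : ℝ :=
  if t ≤ 0 then 0
  else 1 - (1 - Real.exp (-a * t)) / (a * t)
    + (t / (a * (lam + t) ^ 2)) * (1 - Real.exp (-a * (lam + t)))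

/-! On `(0, ∞)` the CDF is the closed formula `expMaxUExpCDFOnPos`, whose derivative is a direct
computation. As `t → 0⁺` the only delicate term is `(1 - e^{-at}) / (at)`, a difference quotient of
`1 - e^{-x}` at `0`, hence `→ 1`; the other terms are continuous at `0`.
As `t → ∞`, both `(1 - e^{-at}) / (at)` and `t / (a (λ + t)²)` tend to `0`. -/

open Real Topology

lemma tendsto_one_sub_exp_neg_atTop : Tendsto (fun x : ℝ => 1 - exp (-x)) atTop (𝓝 1) := by
  simpa using tendsto_const_nhds.sub tendsto_exp_neg_atTop_nhds_zero

lemma tendsto_one_sub_exp_neg_div_self_atTop :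
    Tendsto (fun x : ℝ => (1 - exp (-x)) / x) atTop (𝓝 0) :=
  tendsto_one_sub_exp_neg_atTop.div_atTop tendsto_id

lemma tendsto_one_sub_exp_neg_div_self_nhdsNE :
    Tendsto (fun x : ℝ => (1 - exp (-x)) / x) (𝓝[≠] 0) (𝓝 1) := by
  have h : HasDerivAt (fun x : ℝ => 1 - exp (-x)) 1 0 := by
    simpa using ((hasDerivAt_neg (0 : ℝ)).exp).const_sub 1
  rw [hasDerivAt_iff_tendsto_slope, slope_fun_def_field] at h
  simpa using h

lemma tendsto_const_mul_nhdsNE_zero {a : ℝ} (ha : a ≠ 0) :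
    Tendsto (a * ·) (𝓝[≠] 0) (𝓝[≠] 0) :=
  tendsto_nhdsWithin_of_tendsto_nhds_of_eventually_within _
    (((continuous_const_mul a).tendsto' 0 0 (mul_zero a)).mono_left nhdsWithin_le_nhds)
    (eventually_nhdsWithin_of_forall fun _ hx => mul_ne_zero ha hx)

lemma tendsto_div_mul_add_sq_atTop (c lam : ℝ) :
    Tendsto (fun t : ℝ => t / (c * (lam + t) ^ 2)) atTop (𝓝 0) := by
  -- with `u = lam + t`, `t / u ^ 2 = u⁻¹ - lam * u⁻¹ ^ 2`
  have h : Tendsto (fun u : ℝ => u⁻¹ - lam * u⁻¹ ^ 2) atTop (𝓝 0) := by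
    simpa using tendsto_inv_atTop_zero.sub ((tendsto_inv_atTop_zero.pow 2).const_mul lam)
  have h' : Tendsto (fun t : ℝ => t / (lam + t) ^ 2) atTop (𝓝 0) := by
    refine (h.comp (tendsto_atTop_add_const_left _ lam tendsto_id)).congr' ?_
    filter_upwards [eventually_gt_atTop (-lam)] with t ht
    have : lam + t ≠ 0 := by linarith
    simp only [Function.comp_apply, id]
    field_simp
    ring
  simp_rw [mul_comm c, ← div_div]
  simpa using h'.div_const c

lemma hasDerivAt_one_sub_exp_neg_mul (a x : ℝ) :
    HasDerivAt (fun s => 1 - exp (-(a * s))) (exp (-(a * x)) * a) x := by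
  simpa using (((hasDerivAt_id x).const_mul a).neg.exp).const_sub 1

noncomputable def expMaxUExpCDFOnPos (a lam t : ℝ) : ℝ :=
  1 - (1 - exp (-(a * t))) / (a * t) + t / (a * (lam + t) ^ 2) * (1 - exp (-(a * (lam + t))))

lemma expMaxUExpCDF_eqOn_Ioi (a lam : ℝ) :
    EqOn (expMaxUExpCDF a lam) (expMaxUExpCDFOnPos a lam) (Ioi 0) := fun t ht => by
  simp [expMaxUExpCDF, expMaxUExpCDFOnPos, not_le.mpr (mem_Ioi.mp ht)]

lemma hasDerivAt_expMaxUExpCDF {a lam t : ℝ} (ha : a ≠ 0) (ht : 0 < t) (hlt : lam + t ≠ 0) :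
    HasDerivAt (expMaxUExpCDF a lam) (expMaxUExpPDF a lam t) t := by
  have h : HasDerivAt (expMaxUExpCDFOnPos a lam) _ t :=
    ((hasDerivAt_const t 1).sub ((hasDerivAt_one_sub_exp_neg_mul a t).div
      ((hasDerivAt_id t).const_mul a) (by positivity))).add
    (((hasDerivAt_id t).div ((((hasDerivAt_id t).const_add lam).pow 2).const_mul a)
      (mul_ne_zero ha (pow_ne_zero 2 hlt))).mul
      ((hasDerivAt_one_sub_exp_neg_mul a (lam + t)).comp_const_add lam t))
  refine (h.congr_deriv ?_).congr_of_eventuallyEq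
    ((expMaxUExpCDF_eqOn_Ioi a lam).eventuallyEq_of_mem (Ioi_mem_nhds ht))
  simp only [expMaxUExpPDF, not_le.mpr ht, if_false, id, Pi.div_apply, Pi.pow_apply]
  field_simp
  ring

lemma tendsto_expMaxUExpCDF_nhdsGT_zero {a lam : ℝ} (ha : a ≠ 0) (hlam : lam ≠ 0) :
    Tendsto (expMaxUExpCDF a lam) (𝓝[>] 0) (𝓝 0) := by
  have h₁ : Tendsto (fun t => (1 - exp (-(a * t))) / (a * t)) (𝓝[>] 0) (𝓝 1) :=
    (tendsto_one_sub_exp_neg_div_self_nhdsNE.comp (tendsto_const_mul_nhdsNE_zero ha)).mono_left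
      (nhdsWithin_mono _ fun _ hx => ne_of_gt hx)
  have h₂ : Tendsto (fun t => t / (a * (lam + t) ^ 2) * (1 - exp (-(a * (lam + t))))) (𝓝[>] 0)
      (𝓝 0) := by
    have hcont : ContinuousAt (fun t => t / (a * (lam + t) ^ 2) * (1 - exp (-(a * (lam + t))))) 0 :=
      (continuousAt_id.div (by fun_prop) (by simp [ha, hlam])).mul (by fun_prop)
    simpa using hcont.tendsto.mono_left nhdsWithin_le_nhds
  have h : Tendsto (expMaxUExpCDFOnPos a lam) (𝓝[>] 0) (𝓝 (1 - 1 + 0)) :=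
    (tendsto_const_nhds.sub h₁).add h₂
  rw [sub_self, add_zero] at h
  exact h.congr' (eventuallyEq_nhdsWithin_of_eqOn (expMaxUExpCDF_eqOn_Ioi a lam)).symm

lemma tendsto_expMaxUExpCDF_atTop {a : ℝ} (ha : 0 < a) (lam : ℝ) :
    Tendsto (expMaxUExpCDF a lam) atTop (𝓝 1) := by
  have h₁ : Tendsto (fun t => (1 - exp (-(a * t))) / (a * t)) atTop (𝓝 0) :=
    tendsto_one_sub_exp_neg_div_self_atTop.comp (tendsto_id.const_mul_atTop ha)
  have h₂ : Tendsto (fun t => 1 - exp (-(a * (lam + t)))) atTop (𝓝 1) :=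
    tendsto_one_sub_exp_neg_atTop.comp
      ((tendsto_atTop_add_const_left _ lam tendsto_id).const_mul_atTop ha)
  have h : Tendsto (expMaxUExpCDFOnPos a lam) atTop (𝓝 (1 - 0 + 0 * 1)) :=
    (tendsto_const_nhds.sub h₁).add ((tendsto_div_mul_add_sq_atTop a lam).mul h₂)
  rw [sub_zero, zero_mul, add_zero] at h
  exact h.congr' (EventuallyEq.symm ((eventually_gt_atTop 0).mono (expMaxUExpCDF_eqOn_Ioi a lam)))

theorem expMaxUExpCDF_is_CDF (a lam : ℝ) (ha : 0 < a) (hlam : 0 < lam) :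
    (∀ t : ℝ, 0 < t → HasDerivAt (expMaxUExpCDF a lam) (expMaxUExpPDF a lam t) t) ∧
    Tendsto (expMaxUExpCDF a lam) (nhdsWithin 0 (Set.Ioi 0)) (nhds 0) ∧
    Tendsto (expMaxUExpCDF a lam) atTop (nhds 1) :=
  ⟨fun _ ht => hasDerivAt_expMaxUExpCDF ha.ne' ht (by positivity),
    tendsto_expMaxUExpCDF_nhdsGT_zero ha.ne' hlam.ne', tendsto_expMaxUExpCDF_atTop ha lam⟩
end
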